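/- arXiv:2604.23142 — 2 statements merged into one kernel-verified Lean document; each statement's English description precedes it below -/
import Mathlib

section
/- (Swapping Lemma, scalar version) Let λ > 0 and let F be the filter λ/(p+λ) with zero initial condition, i.e., F[u] solves y' = -λ y + λ u, y(0) = 0. Then for any continuous signal w : ℝ≥0 → ℝ and any continuously differentiable signal v : ℝ≥0 → ℝ, the identity F[w·v](t) = F[w](t)·v(t) - F[(1/λ)·F[w]·v'](t) holds for all t ≥ 0. -/
/-!
By the product rule, the defect `F[w·v] - (F[w]·v - G)` solves `D' = -λ D` (the factors `λ` and
`1/λ` in `G` cancel), and it vanishes at `0`; uniqueness for this linear ODE makes it vanish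
identically.
-/

theorem eq_zero_of_hasDerivAt_smul_self {E : Type*} [NormedAddCommGroup E] [NormedSpace ℝ E]
    {f : ℝ → E} {c t₀ : ℝ} (hf : ∀ t, HasDerivAt f (c • f t) t) (h₀ : f t₀ = 0) : f = 0 :=
  ODE_solution_unique_univ (v := fun _ x => c • x) (s := fun _ => Set.univ)
    (fun _ => (lipschitzWith_smul c).lipschitzOnWith) (fun t => ⟨hf t, trivial⟩)
    (fun _ => ⟨by simp, trivial⟩) h₀

theorem stmt1_general (lam : ℝ) (hlam : 0 < lam)
    (w v dv : ℝ → ℝ)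
    (hv : ∀ t, HasDerivAt v (dv t) t)
    (Fw Fwv G : ℝ → ℝ)
    (hFw0 : Fw 0 = 0) (hFw : ∀ t, HasDerivAt Fw (-lam * Fw t + lam * w t) t)
    (hFwv0 : Fwv 0 = 0)
    (hFwv : ∀ t, HasDerivAt Fwv (-lam * Fwv t + lam * (w t * v t)) t)
    (hG0 : G 0 = 0)
    (hG : ∀ t, HasDerivAt G (-lam * G t + lam * ((1 / lam) * Fw t * dv t)) t) :
    ∀ t ≥ (0 : ℝ), Fwv t = Fw t * v t - G t := by
  set defect : ℝ → ℝ := fun t => Fwv t - (Fw t * v t - G t)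
  have hdefect : ∀ t, HasDerivAt defect (-lam • defect t) t := fun t =>
    ((hFwv t).sub (((hFw t).mul (hv t)).sub (hG t))).congr_deriv <| by
      simp only [defect, smul_eq_mul]
      field_simp
      ring
  have hdefect0 : defect 0 = 0 := by simp [defect, hFw0, hFwv0, hG0]
  intro t _
  exact sub_eq_zero.mp (congrFun (eq_zero_of_hasDerivAt_smul_self hdefect hdefect0) t)

/-- Swapping Lemma (scalar version): with `F` the filter `λ/(p+λ)` with zero initial
condition, `F[w·v](t) = F[w](t)·v(t) - F[(1/λ)·F[w]·v'](t)` for all `t ≥ 0`. -/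
theorem stmt1 (lam : ℝ) (hlam : 0 < lam)
    (w v dv : ℝ → ℝ) (hw : Continuous w)
    (hv : ∀ t, HasDerivAt v (dv t) t) (hdv : Continuous dv)
    (Fw Fwv G : ℝ → ℝ)
    (hFw0 : Fw 0 = 0) (hFw : ∀ t, HasDerivAt Fw (-lam * Fw t + lam * w t) t)
    (hFwv0 : Fwv 0 = 0)
    (hFwv : ∀ t, HasDerivAt Fwv (-lam * Fwv t + lam * (w t * v t)) t)
    (hG0 : G 0 = 0)
    (hG : ∀ t, HasDerivAt G (-lam * G t + lam * ((1 / lam) * Fw t * dv t)) t) :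
    ∀ t ≥ (0 : ℝ), Fwv t = Fw t * v t - G t :=
  stmt1_general lam hlam w v dv hv Fw Fwv G hFw0 hFw hFwv0 hFwv hG0 hG
end

section
/- Consider the double integrator x₁' = x₂, x₂' = u with output y = x₁, where u : ℝ≥0 → ℝ is continuous. Let λ > 0 and let F be the filter λ/(p+λ) with zero initial condition. Then for all t ≥ 0, x₂(t) = λ·(y(t) − F[y](t)) + (1/λ)·F[u](t) + (x₂(0) − λ·x₁(0))·e^{-λt}. In particular x₂(t) − (p F[y](t) + (1/λ)F[u](t)) → 0 exponentially as t → ∞, where p F[y] := λ(y − F[y]). -/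
/-!
The observer error `e = x₂ - (λ(y - F[y]) + λ⁻¹ F[u])` satisfies `e' = -λ e`: the input `u`
cancels between `x₂' = u` and `(λ⁻¹ F[u])' = u - F[u]`, and what is left is `-λ e`. Hence
`e(t) = e(0) e^{-λt}`, and the zero initial states of the filters give `e(0) = x₂(0) - λ x₁(0)`.
-/

open Real Filter Topology

theorem eq_mul_exp_of_hasDerivAt_neg_mul {lam : ℝ} {g : ℝ → ℝ}
    (hg : ∀ t, HasDerivAt g (-lam * g t) t) (t : ℝ) :
    g t = g 0 * exp (-lam * t) := by
  have hderiv : ∀ s, HasDerivAt (fun s => g s * exp (lam * s)) 0 s := fun s => by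
    have hexp : HasDerivAt (fun s => exp (lam * s)) (exp (lam * s) * lam) s := by
      simpa using ((hasDerivAt_id s).const_mul lam).exp
    exact ((hg s).mul hexp).congr_deriv (by ring)
  have hconst : g t * exp (lam * t) = g 0 * exp (lam * 0) :=
    is_const_of_deriv_eq_zero (fun s => (hderiv s).differentiableAt)
      (fun s => (hderiv s).deriv) t 0
  rw [mul_zero, exp_zero, mul_one] at hconst
  calc g t = g t * exp (lam * t) * exp (-lam * t) := by
        rw [mul_assoc, ← exp_add, neg_mul, add_neg_cancel, exp_zero, mul_one]
    _ = g 0 * exp (-lam * t) := by rw [hconst]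

theorem tendsto_const_mul_exp_neg_mul_atTop {lam : ℝ} (hlam : 0 < lam) (c : ℝ) :
    Tendsto (fun t => c * exp (-lam * t)) atTop (𝓝 0) := by
  have hexp : Tendsto (fun t => exp (-(lam * t))) atTop (𝓝 0) :=
    tendsto_exp_neg_atTop_nhds_zero.comp (tendsto_id.const_mul_atTop hlam)
  simpa only [neg_mul, mul_zero] using hexp.const_mul c

/-- The ASLO estimate `p F[y] + λ⁻¹ F[u]` of `x₂`, with `p F[y] = λ (y - F[y])`. -/
noncomputable def asloEstimate (lam : ℝ) (y Fy Fu : ℝ → ℝ) (t : ℝ) : ℝ :=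
  lam * (y t - Fy t) + (1 / lam) * Fu t

theorem hasDerivAt_sub_asloEstimate {lam : ℝ} (hlam : lam ≠ 0) {u y x2 Fy Fu : ℝ → ℝ}
    (hy : ∀ t, HasDerivAt y (x2 t) t) (hx2 : ∀ t, HasDerivAt x2 (u t) t)
    (hFy : ∀ t, HasDerivAt Fy (-lam * Fy t + lam * y t) t)
    (hFu : ∀ t, HasDerivAt Fu (-lam * Fu t + lam * u t) t) (t : ℝ) :
    HasDerivAt (fun s => x2 s - asloEstimate lam y Fy Fu s)
      (-lam * (x2 t - asloEstimate lam y Fy Fu t)) t := by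
  refine ((hx2 t).sub ((((hy t).sub (hFy t)).const_mul lam).add
    ((hFu t).const_mul (1 / lam)))).congr_deriv ?_
  simp only [asloEstimate]
  field_simp
  ring

theorem stmt2_general (lam : ℝ) (hlam : 0 < lam)
    (u x1 x2 y Fy Fu : ℝ → ℝ)
    (hx1 : ∀ t, HasDerivAt x1 (x2 t) t)
    (hx2 : ∀ t, HasDerivAt x2 (u t) t)
    (hy : ∀ t, y t = x1 t)
    (hFy0 : Fy 0 = 0) (hFy : ∀ t, HasDerivAt Fy (-lam * Fy t + lam * y t) t)
    (hFu0 : Fu 0 = 0) (hFu : ∀ t, HasDerivAt Fu (-lam * Fu t + lam * u t) t) :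
    (∀ t ≥ (0 : ℝ),
      x2 t = lam * (y t - Fy t) + (1 / lam) * Fu t
        + (x2 0 - lam * x1 0) * Real.exp (-lam * t))
    ∧ Filter.Tendsto
        (fun t => x2 t - (lam * (y t - Fy t) + (1 / lam) * Fu t))
        Filter.atTop (nhds 0) := by
  obtain rfl : y = x1 := funext hy
  have herror : ∀ t, x2 t - asloEstimate lam y Fy Fu t = (x2 0 - lam * y 0) * exp (-lam * t) :=
    fun t => by
      have := eq_mul_exp_of_hasDerivAt_neg_mul
        (hasDerivAt_sub_asloEstimate hlam.ne' hx1 hx2 hFy hFu) t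
      simpa [asloEstimate, hFy0, hFu0] using this
  refine ⟨fun t _ => ?_, ?_⟩
  · have := herror t
    simp only [asloEstimate] at this
    linarith
  · exact (tendsto_const_mul_exp_neg_mul_atTop hlam _).congr fun t => (herror t).symm

/-- ASLO for the double integrator: for all `t ≥ 0`,
`x₂(t) = λ(y(t) − F[y](t)) + (1/λ)F[u](t) + (x₂(0) − λx₁(0))e^{-λt}`;
in particular the ASLO estimate `pF[y] + (1/λ)F[u]` converges to `x₂` exponentially. -/
theorem stmt2 (lam : ℝ) (hlam : 0 < lam)
    (u x1 x2 y Fy Fu : ℝ → ℝ) (hu : Continuous u)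
    (hx1 : ∀ t, HasDerivAt x1 (x2 t) t)
    (hx2 : ∀ t, HasDerivAt x2 (u t) t)
    (hy : ∀ t, y t = x1 t)
    (hFy0 : Fy 0 = 0) (hFy : ∀ t, HasDerivAt Fy (-lam * Fy t + lam * y t) t)
    (hFu0 : Fu 0 = 0) (hFu : ∀ t, HasDerivAt Fu (-lam * Fu t + lam * u t) t) :
    (∀ t ≥ (0 : ℝ),
      x2 t = lam * (y t - Fy t) + (1 / lam) * Fu t
        + (x2 0 - lam * x1 0) * Real.exp (-lam * t))
    ∧ Filter.Tendsto
        (fun t => x2 t - (lam * (y t - Fy t) + (1 / lam) * Fu t))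
        Filter.atTop (nhds 0) :=
  stmt2_general lam hlam u x1 x2 y Fy Fu hx1 hx2 hy hFy0 hFy hFu0 hFu
end
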